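/- arXiv:1109.5308 — 5 statements merged into one kernel-verified Lean document; each statement's English description precedes it below -/
import Mathlib

section
/- Let (Gₙ)ₙ∈ℕ be a sequence of finite discrete groups each with at least 2 elements, and let G = ∏ₙ Gₙ with the product topology and its Haar (product) probability measure. Then there exists a compact subset C ⊆ G of Haar measure zero such that for every sequence of subsets Sₙ ⊆ Gₙ' (where the factors are suitably grouped into finite blocks Gₙ' with |Gₙ'| > 2(n+3)) with |Sₙ| ≤ n+2 for all n, there exists g ∈ G with ∏ₙ Sₙ ⊆ g·C. -/
open MeasureTheory Pointwise
open scoped ENNReal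

/-
Group the coordinates into consecutive blocks `block t` of length `t + 2`, and these in turn into
coarse blocks: the `n`-th coarse block is the union of the `n + 2` blocks `t ∈ block n`. Let `C`
be the set of `x` that, in every coarse block, are trivial on at least one of its blocks.
Given a slalom with `|Sₙ| ≤ n + 2`, list the elements of `Sₙ` along the blocks of the `n`-th
coarse block and let `g` agree with the `t`-th listed element on block `t`; then `g⁻¹ x ∈ C` for
every `x` in the slalom. On the other hand, if `D` only involves earlier coordinates, the
translates of `D ∩ {x = 1 on block t}` by elements supported on block `t` are disjoint subsets
of `D`, so this set has at most a `2^-(t+2)` share of `μ D`. Summing over the `n + 2` blocks of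
the `n`-th coarse block, each coarse block at least halves the measure, and `μ C = 0`.
-/

lemma ENNReal.eq_zero_of_forall_two_pow_mul_le {a b : ℝ≥0∞} (hb : b ≠ ∞)
    (h : ∀ N : ℕ, 2 ^ N * a ≤ b) : a = 0 := by
  by_contra ha
  obtain ⟨N, hN⟩ := ENNReal.exists_nat_mul_gt ha hb
  have hN2 : (N : ℝ≥0∞) ≤ 2 ^ N := by exact_mod_cast Nat.lt_two_pow_self.le
  exact (hN.trans_le (mul_le_mul_left hN2 a)).not_ge (h N)

lemma Set.Finite.exists_subset_image_of_encard_le {α β : Type*} [Nonempty α] [Nonempty β]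
    {S : Set β} {s : Set α} (hS : S.Finite) (h : S.encard ≤ s.encard) :
    ∃ f : α → β, S ⊆ f '' s := by
  obtain ⟨f, hf, hinj⟩ := hS.exists_injOn_of_encard_le h
  exact ⟨Function.invFunOn f S, fun b hb => ⟨f b, hf hb, hinj.leftInvOn_invFunOn hb⟩⟩

section HaarProduct

lemma isClosed_setOf_forall_mem_eq_one {ι : Type*} {G : ι → Type*} [∀ i, One (G i)]
    [∀ i, TopologicalSpace (G i)] [∀ i, T1Space (G i)] (s : Set ι) :
    IsClosed {x : ∀ i, G i | ∀ i ∈ s, x i = 1} := by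
  simp only [Set.ofPred_forall]
  exact isClosed_biInter fun i _ => isClosed_singleton.preimage (continuous_apply i)

variable {ι : Type*} {G : ι → Type*} [∀ i, Group (G i)] [∀ i, Fintype (G i)]
  [∀ i, TopologicalSpace (G i)] [∀ i, T1Space (G i)]
  [MeasurableSpace (∀ i, G i)] [BorelSpace (∀ i, G i)] (μ : Measure (∀ i, G i))
  [μ.IsMulLeftInvariant]

lemma prod_card_mul_measure_inter_le (s : Finset ι) {D : Set (∀ i, G i)} (hD : MeasurableSet D)
    (hDs : DependsOn (· ∈ D) (↑s)ᶜ) :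
    (∏ i ∈ s, Fintype.card (G i) : ℝ≥0∞) * μ (D ∩ {x | ∀ i ∈ s, x i = 1}) ≤ μ D := by
  classical
  set E := D ∩ {x : ∀ i, G i | ∀ i ∈ s, x i = 1}
  let extend : (∀ i : s, G i) → ∀ i, G i := fun w i => if h : i ∈ s then w ⟨i, h⟩ else 1
  have hE : MeasurableSet E :=
    hD.inter (isClosed_setOf_forall_mem_eq_one (G := G) (s : Set ι)).measurableSet
  have hsub : ∀ w, extend w • E ⊆ D := by
    rintro w _ ⟨x, ⟨hxD, -⟩, rfl⟩
    refine Eq.mp (hDs fun i hi => ?_) hxD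
    simp_all [extend]
  have hval : ∀ w, ∀ z ∈ extend w • E, ∀ i : s, z i = w i := by
    rintro w _ ⟨x, ⟨-, hx⟩, rfl⟩ i
    simp [extend, hx i i.2]
  have hdisj : Pairwise (Function.onFun Disjoint fun w => extend w • E) := fun w w' hne =>
    Set.disjoint_left.2 fun z hz hz' =>
      hne (funext fun i => (hval w z hz i).symm.trans (hval w' z hz' i))
  calc (∏ i ∈ s, Fintype.card (G i) : ℝ≥0∞) * μ E
      = ∑ w : (∀ i : s, G i), μ (extend w • E) := by
        rw [Finset.sum_congr rfl fun w _ => measure_smul μ (extend w) E, Finset.sum_const,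
          Finset.card_univ, Fintype.card_pi, nsmul_eq_mul, Nat.cast_prod,
          Finset.prod_coe_sort s fun i => (Fintype.card (G i) : ℝ≥0∞)]
    _ = μ (⋃ w, extend w • E) := by
        rw [measure_iUnion hdisj fun w => hE.const_smul _, tsum_fintype]
    _ ≤ μ D := measure_mono (Set.iUnion_subset hsub)

end HaarProduct

def blockStart : ℕ → ℕ
  | 0 => 0
  | n + 1 => blockStart n + n + 2

lemma blockStart_succ (n : ℕ) : blockStart (n + 1) = blockStart n + n + 2 := rfl

lemma blockStart_strictMono : StrictMono blockStart :=
  strictMono_nat_of_lt_succ fun n => by rw [blockStart_succ]; omega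

lemma blockStart_add_le (m c : ℕ) : blockStart m + 2 * c ≤ blockStart (m + c) := by
  induction c with
  | zero => simp
  | succ c ih => rw [← Nat.add_assoc, blockStart_succ]; omega

abbrev block (t : ℕ) : Finset ℕ := Finset.Ico (blockStart t) (blockStart (t + 1))

lemma card_block (t : ℕ) : (block t).card = t + 2 := by
  rw [Nat.card_Ico, blockStart_succ]; omega

lemma eq_of_mem_block {i t t' : ℕ} (h : i ∈ block t) (h' : i ∈ block t') : t = t' := by
  simp only [Finset.mem_Ico] at h h'
  by_contra hne
  rcases Nat.lt_or_gt_of_ne hne with hlt | hlt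
  · have := blockStart_strictMono.monotone (show t + 1 ≤ t' from hlt); omega
  · have := blockStart_strictMono.monotone (show t' + 1 ≤ t from hlt); omega

lemma exists_mem_block (i : ℕ) : ∃ t, i ∈ block t := by
  induction i with
  | zero => exact ⟨0, by simp [blockStart]⟩
  | succ i ih =>
    obtain ⟨t, ht⟩ := ih
    simp only [Finset.mem_Ico] at ht ⊢
    by_cases h : i + 1 < blockStart (t + 1)
    · exact ⟨t, by omega, h⟩
    · exact ⟨t + 1, by omega, by rw [blockStart_succ] at h ⊢; omega⟩

def blockOf (i : ℕ) : ℕ := Nat.find (exists_mem_block i)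

lemma mem_block_blockOf (i : ℕ) : i ∈ block (blockOf i) := Nat.find_spec (exists_mem_block i)

lemma blockOf_eq {i t : ℕ} (h : i ∈ block t) : blockOf i = t :=
  eq_of_mem_block (mem_block_blockOf i) h

abbrev coarseBlock (n : ℕ) : Finset ℕ :=
  Finset.Ico (blockStart (blockStart n)) (blockStart (blockStart (n + 1)))

lemma mem_coarseBlock {n t i : ℕ} (ht : t ∈ block n) (hi : i ∈ block t) :
    i ∈ coarseBlock n := by
  simp only [Finset.mem_Ico] at ht hi ⊢
  exact ⟨(blockStart_strictMono.monotone ht.1).trans hi.1,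
    hi.2.trans_le (blockStart_strictMono.monotone ht.2)⟩

lemma two_mul_card_coarseBlock_le (n : ℕ) : 2 * (n + 2) ≤ (coarseBlock n).card := by
  have := blockStart_add_le (blockStart n) (n + 2)
  rw [Nat.card_Ico, ← Nat.add_assoc, ← blockStart_succ] at *
  omega

lemma two_mul_lt_prod_card_coarseBlock {G : ℕ → Type*} [∀ i, Fintype (G i)]
    (hcard : ∀ i, 2 ≤ Fintype.card (G i)) (n : ℕ) :
    2 * (n + 3) < ∏ i ∈ coarseBlock n, Fintype.card (G i) :=
  calc 2 * (n + 3) < 2 * 2 ^ (n + 3) := by have := Nat.lt_two_pow_self (n := n + 3); omega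
    _ = 2 ^ (n + 4) := by ring
    _ ≤ 2 ^ (2 * (n + 2)) := Nat.pow_le_pow_right two_pos (by omega)
    _ ≤ 2 ^ (coarseBlock n).card := Nat.pow_le_pow_right two_pos (two_mul_card_coarseBlock_le n)
    _ ≤ _ := Finset.pow_card_le_prod _ _ _ fun i _ => hcard i

def trivialOnSomeBlock (G : ℕ → Type*) [∀ i, One (G i)] (n : ℕ) : Set (∀ i, G i) :=
  ⋃ t ∈ block n, {x | ∀ i ∈ block t, x i = 1}

lemma isClosed_trivialOnSomeBlock {G : ℕ → Type*} [∀ i, One (G i)]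
    [∀ i, TopologicalSpace (G i)] [∀ i, T1Space (G i)] (n : ℕ) :
    IsClosed (trivialOnSomeBlock G n) :=
  isClosed_biUnion_finset fun _ _ => isClosed_setOf_forall_mem_eq_one _

lemma dependsOn_trivialOnSomeBlock {G : ℕ → Type*} [∀ i, One (G i)] (n : ℕ) :
    DependsOn (· ∈ trivialOnSomeBlock G n) (Set.Iio (blockStart (blockStart (n + 1)))) := by
  intro x y hxy
  simp only [trivialOnSomeBlock, Set.mem_iUnion₂, Set.mem_ofPred_eq, exists_prop]
  refine propext (exists_congr fun t => and_congr_right fun ht => forall₂_congr fun i hi => ?_)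
  rw [hxy i (Finset.mem_Ico.1 (mem_coarseBlock ht hi)).2]

section TrivialOnSomeBlock

variable {G : ℕ → Type*} [∀ i, Group (G i)] [∀ i, Fintype (G i)]
  [∀ i, TopologicalSpace (G i)] [∀ i, T1Space (G i)]
  [MeasurableSpace (∀ i, G i)] [BorelSpace (∀ i, G i)] (μ : Measure (∀ i, G i))
  [μ.IsMulLeftInvariant]

lemma two_pow_mul_measure_inter_trivialOnBlock_le (hcard : ∀ i, 2 ≤ Fintype.card (G i))
    {n t : ℕ} (ht : t ∈ block n) {D : Set (∀ i, G i)} (hD : MeasurableSet D)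
    (hDn : DependsOn (· ∈ D) (Set.Iio (blockStart (blockStart n)))) :
    2 ^ (n + 2) * μ (D ∩ {x | ∀ i ∈ block t, x i = 1}) ≤ μ D := by
  have htn : n ≤ t := blockStart_strictMono.le_apply.trans (Finset.mem_Ico.1 ht).1
  have hcard_block : 2 ^ (n + 2) ≤ ∏ i ∈ block t, Fintype.card (G i) :=
    calc 2 ^ (n + 2) ≤ 2 ^ (block t).card := by
          rw [card_block]; exact Nat.pow_le_pow_right two_pos (by omega)
      _ ≤ _ := Finset.pow_card_le_prod _ _ _ fun i _ => hcard i
  have hDt : DependsOn (· ∈ D) (↑(block t))ᶜ := hDn.mono fun i hi hit =>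
    (Set.mem_Iio.1 hi).not_ge ((blockStart_strictMono.monotone (Finset.mem_Ico.1 ht).1).trans
      (Finset.mem_Ico.1 hit).1)
  calc 2 ^ (n + 2) * μ (D ∩ {x | ∀ i ∈ block t, x i = 1})
      ≤ (∏ i ∈ block t, Fintype.card (G i) : ℝ≥0∞) * μ (D ∩ {x | ∀ i ∈ block t, x i = 1}) := by
        gcongr; exact_mod_cast hcard_block
    _ ≤ μ D := prod_card_mul_measure_inter_le μ (block t) hD hDt

lemma two_mul_measure_inter_trivialOnSomeBlock_le (hcard : ∀ i, 2 ≤ Fintype.card (G i))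
    (n : ℕ) {D : Set (∀ i, G i)} (hD : MeasurableSet D)
    (hDn : DependsOn (· ∈ D) (Set.Iio (blockStart (blockStart n)))) :
    2 * μ (D ∩ trivialOnSomeBlock G n) ≤ μ D := by
  refine (ENNReal.mul_le_mul_iff_right (pow_ne_zero (n + 1) two_ne_zero)
    (ENNReal.pow_ne_top ENNReal.ofNat_ne_top)).1 ?_
  calc 2 ^ (n + 1) * (2 * μ (D ∩ trivialOnSomeBlock G n))
      = 2 ^ (n + 2) * μ (⋃ t ∈ block n, D ∩ {x | ∀ i ∈ block t, x i = 1}) := by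
        rw [trivialOnSomeBlock, Set.inter_iUnion₂, ← mul_assoc, ← pow_succ]
    _ ≤ 2 ^ (n + 2) * ∑ t ∈ block n, μ (D ∩ {x | ∀ i ∈ block t, x i = 1}) := by
        gcongr; exact measure_biUnion_finset_le _ _
    _ ≤ ∑ _t ∈ block n, μ D := by
        rw [Finset.mul_sum]
        exact Finset.sum_le_sum fun t ht =>
          two_pow_mul_measure_inter_trivialOnBlock_le μ hcard ht hD hDn
    _ = (n + 2 : ℕ) * μ D := by rw [Finset.sum_const, card_block, nsmul_eq_mul]
    _ ≤ 2 ^ (n + 1) * μ D := by gcongr; exact_mod_cast Nat.lt_two_pow_self (n := n + 1)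

lemma two_pow_mul_measure_biInter_trivialOnSomeBlock_le (hcard : ∀ i, 2 ≤ Fintype.card (G i))
    (N : ℕ) : 2 ^ N * μ (⋂ m ∈ Finset.range N, trivialOnSomeBlock G m) ≤ μ Set.univ := by
  induction N with
  | zero => simp
  | succ N ih =>
    set D := ⋂ m ∈ Finset.range N, trivialOnSomeBlock G m
    have hD : MeasurableSet D :=
      (isClosed_biInter fun m _ => isClosed_trivialOnSomeBlock m).measurableSet
    have hDN : DependsOn (· ∈ D) (Set.Iio (blockStart (blockStart N))) := fun x y hxy => by
      simp only [D, Set.mem_iInter₂]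
      refine propext (forall₂_congr fun m hm => Iff.of_eq ?_)
      refine (dependsOn_trivialOnSomeBlock m).mono (Set.Iio_subset_Iio ?_) hxy
      exact blockStart_strictMono.monotone
        (blockStart_strictMono.monotone (Finset.mem_range.1 hm))
    calc 2 ^ (N + 1) * μ (⋂ m ∈ Finset.range (N + 1), trivialOnSomeBlock G m)
        = 2 ^ N * (2 * μ (D ∩ trivialOnSomeBlock G N)) := by
          rw [Finset.range_add_one, Finset.set_biInter_insert, Set.inter_comm, pow_succ,
            mul_assoc]
      _ ≤ 2 ^ N * μ D := by
          gcongr; exact two_mul_measure_inter_trivialOnSomeBlock_le μ hcard N hD hDN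
      _ ≤ μ Set.univ := ih

lemma measure_iInter_trivialOnSomeBlock [IsFiniteMeasure μ]
    (hcard : ∀ i, 2 ≤ Fintype.card (G i)) : μ (⋂ n, trivialOnSomeBlock G n) = 0 :=
  ENNReal.eq_zero_of_forall_two_pow_mul_le (measure_ne_top μ Set.univ) fun N =>
    (mul_le_mul_right (measure_mono fun _ hx =>
      Set.mem_iInter₂.2 fun m _ => Set.mem_iInter.1 hx m) _).trans
      (two_pow_mul_measure_biInter_trivialOnSomeBlock_le μ hcard N)

end TrivialOnSomeBlock

section Slalom

variable {G : ℕ → Type*}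

def slalomShift (y : ∀ n, ℕ → (i : coarseBlock n) → G i) : ∀ i, G i := fun i =>
  y (blockOf (blockOf i)) (blockOf i)
    ⟨i, mem_coarseBlock (mem_block_blockOf _) (mem_block_blockOf i)⟩

lemma slalomShift_apply (y : ∀ n, ℕ → (i : coarseBlock n) → G i) {n t i : ℕ} (ht : t ∈ block n)
    (hi : i ∈ block t) : slalomShift y i = y n t ⟨i, mem_coarseBlock ht hi⟩ := by
  obtain rfl := blockOf_eq hi
  obtain rfl := blockOf_eq ht
  rfl

lemma exists_slalom_subset_smul_iInter_trivialOnSomeBlock [∀ i, Group (G i)]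
    [∀ i, Finite (G i)] (S : ∀ n, Set ((i : coarseBlock n) → G i)) (hS : ∀ n, (S n).ncard ≤ n + 2) :
    ∃ g : ∀ i, G i, {x | ∀ n, (fun i : coarseBlock n => x i) ∈ S n} ⊆
      g • ⋂ n, trivialOnSomeBlock G n := by
  have hy : ∀ n, ∃ y : ℕ → (i : coarseBlock n) → G i, S n ⊆ y '' block n := fun n =>
    (S n).toFinite.exists_subset_image_of_encard_le <| by
      rw [← (S n).toFinite.cast_ncard_eq, Set.encard_coe_eq_coe_finsetCard, card_block]
      exact_mod_cast hS n
  choose y hy using hy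
  refine ⟨slalomShift y, fun x hx => ?_⟩
  rw [Set.mem_smul_set_iff_inv_smul_mem, Set.mem_iInter]
  intro n
  obtain ⟨t, ht, hxt⟩ := hy n (hx n)
  refine Set.mem_biUnion ht fun i hi => ?_
  simp only [Pi.smul_apply', smul_eq_mul, Pi.inv_apply, slalomShift_apply y ht hi, hxt,
    inv_mul_cancel]

end Slalom

/-- Let `(Gₙ)` be a sequence of finite discrete groups, each of at least 2 elements, and let
`G = ∏ₙ Gₙ` with the product topology and a Haar measure `μ`. Then there is a compact set
`C ⊆ G` of Haar measure zero and a grouping of the coordinates into consecutive finite blocks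
`Gₙ' = ∏_{kₙ ≤ i < kₙ₊₁} Gᵢ` with `|Gₙ'| > 2(n+3)`, such that for every sequence of sets
`Sₙ ⊆ Gₙ'` with `|Sₙ| ≤ n+2` there is `g ∈ G` with the corresponding slalom
`∏ₙ Sₙ ⊆ g • C`. -/
theorem product_of_finite_groups_is_nice (G : ℕ → Type) [∀ n, Group (G n)]
    [∀ n, Fintype (G n)] [∀ n, TopologicalSpace (G n)] [∀ n, DiscreteTopology (G n)]
    (hcard : ∀ n, 2 ≤ Fintype.card (G n))
    [MeasurableSpace (∀ n, G n)] [BorelSpace (∀ n, G n)]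
    (μ : Measure (∀ n, G n)) [μ.IsHaarMeasure] :
    ∃ C : Set (∀ n, G n), IsCompact C ∧ μ C = 0 ∧
      ∃ k : ℕ → ℕ, k 0 = 0 ∧ StrictMono k ∧
        (∀ n, 2 * (n + 3) < ∏ i ∈ Finset.Ico (k n) (k (n + 1)), Fintype.card (G i)) ∧
        ∀ S : (n : ℕ) → Set ((i : Finset.Ico (k n) (k (n + 1))) → G i.1),
          (∀ n, (S n).ncard ≤ n + 2) →
          ∃ g : ∀ n, G n,
            {x : ∀ n, G n | ∀ n, (fun i : Finset.Ico (k n) (k (n + 1)) => x i.1) ∈ S n}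
              ⊆ g • C :=
  ⟨⋂ n, trivialOnSomeBlock G n, (isClosed_iInter isClosed_trivialOnSomeBlock).isCompact,
    measure_iInter_trivialOnSomeBlock μ hcard, fun n => blockStart (blockStart n), rfl,
    blockStart_strictMono.comp blockStart_strictMono, two_mul_lt_prod_card_coarseBlock hcard,
    exists_slalom_subset_smul_iInter_trivialOnSomeBlock⟩
end

section
/- Let p be a prime and let G be an infinite abelian p-group such that for every n ∈ ℕ the subgroup G[pⁿ] = {g ∈ G : pⁿ·g = 0} is finite. Then G contains a subgroup isomorphic to the Prüfer p-group ℤ(p^∞). -/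
/-- The Prüfer (quasicyclic) group `ℤ(p^∞)`: the `p`-primary component of `ℚ/ℤ`. -/
def PruferGroup (p : ℕ) [Fact p.Prime] : Type :=
  AddCommGroup.primaryComponent (ℚ ⧸ AddSubgroup.zmultiples (1 : ℚ)) p

noncomputable instance (p : ℕ) [Fact p.Prime] : AddCommGroup (PruferGroup p) :=
  (AddCommGroup.primaryComponent (ℚ ⧸ AddSubgroup.zmultiples (1 : ℚ)) p).toAddCommGroup

/-!
Let `D` be the set of elements divisible by every power of `p`. Nested nonempty subsets of a finite
set have nonempty intersection, so the finiteness of `G[p]` yields a nonzero `a ∈ D` with `p a = 0`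
(each `pᵏG` meets `G[p] \ {0}` because `G` is infinite), and the finiteness of `G[pⁿ⁺¹]` shows that
every `d ∈ D` with `pⁿ d = 0` has a `p`-th root in `D`. Iterating gives `g₀ = a` and `p gₙ₊₁ = gₙ`,
with `gₙ` of order `pⁿ⁺¹`; the same holds for `gₙ = 1 / pⁿ⁺¹` in `ℚ/ℤ`, and matching
`z / pⁿ⁺¹ ↦ z gₙ` embeds `ℤ(p^∞)` into `G`.
-/

open AddSubgroup

theorem Set.nonempty_iInter_of_succ_subset_of_finite {α : Type*} {s : ℕ → Set α}
    (hs : ∀ n, s (n + 1) ⊆ s n) (hne : ∀ n, (s n).Nonempty) (h0 : (s 0).Finite) :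
    (⋂ n, s n).Nonempty :=
  letI : TopologicalSpace α := ⊥
  haveI : DiscreteTopology α := ⟨rfl⟩
  IsCompact.nonempty_iInter_of_sequence_nonempty_isCompact_isClosed s hs hne h0.isCompact
    fun _ => isClosed_discrete _

section Divisibility

variable {G : Type*} [AddCommMonoid G] {p : ℕ}

theorem exists_pow_nsmul_ne_zero_and_nsmul_pow_nsmul_eq_zero {x : G} (hx : x ≠ 0) {n : ℕ}
    (hn : p ^ n • x = 0) : ∃ j, p ^ j • x ≠ 0 ∧ p • p ^ j • x = 0 := by
  induction n with
  | zero => simp_all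
  | succ n ih =>
    by_cases h : p ^ n • x = 0
    · exact ih h
    · exact ⟨n, h, by rwa [← mul_smul, ← pow_succ']⟩

theorem exists_mem_forall_exists_pow_nsmul_eq {P : Set G} (hP : P.Finite)
    (h : ∀ k, ∃ x ∈ P, ∃ y, p ^ k • y = x) : ∃ x ∈ P, ∀ k, ∃ y, p ^ k • y = x := by
  obtain ⟨x, hx⟩ := Set.nonempty_iInter_of_succ_subset_of_finite
    (s := fun k => P ∩ Set.range (p ^ k • · : G → G))
    (fun k => by
      rintro _ ⟨hx, y, rfl⟩
      exact ⟨hx, p • y, show p ^ k • p • y = p ^ (k + 1) • y by rw [← mul_smul, ← pow_succ]⟩)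
    (fun k => by obtain ⟨x, hx, hk⟩ := h k; exact ⟨x, hx, hk⟩)
    (hP.subset Set.inter_subset_left)
  simp only [Set.mem_iInter, Set.mem_inter_iff, Set.mem_range] at hx
  exact ⟨x, (hx 0).1, fun k => (hx k).2⟩

theorem exists_nsmul_eq_forall_exists_pow_nsmul_eq {d : G} {n : ℕ} (hn : p ^ n • d = 0)
    (hfin : {e : G | p ^ (n + 1) • e = 0}.Finite) (hd : ∀ k, ∃ y, p ^ k • y = d) :
    ∃ e, p • e = d ∧ ∀ k, ∃ y, p ^ k • y = e :=
  exists_mem_forall_exists_pow_nsmul_eq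
    (hfin.subset fun e (he : p • e = d) =>
      show p ^ (n + 1) • e = 0 by rw [pow_succ, mul_smul, he, hn])
    fun k => by
      obtain ⟨y, rfl⟩ := hd (k + 1)
      exact ⟨p ^ k • y, show p • p ^ k • y = _ by rw [← mul_smul, ← pow_succ'], y, rfl⟩

end Divisibility

structure IsPruferSeq {G : Type*} [AddCommGroup G] (p : ℕ) (g : ℕ → G) : Prop where
  apply_zero_ne_zero : g 0 ≠ 0
  nsmul_apply_zero : p • g 0 = 0
  nsmul_apply_succ : ∀ n, p • g (n + 1) = g n

namespace IsPruferSeq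

variable {A B : Type*} [AddCommGroup A] [AddCommGroup B] {p : ℕ} {g : ℕ → A} {h : ℕ → B}

theorem pow_nsmul_apply_add (hg : IsPruferSeq p g) (n k : ℕ) : p ^ k • g (n + k) = g n := by
  induction k with
  | zero => simp
  | succ k ih => rw [pow_succ, mul_smul, ← add_assoc, hg.nsmul_apply_succ, ih]

theorem zsmul_apply_add (hg : IsPruferSeq p g) (n k : ℕ) (z : ℤ) :
    ((p : ℤ) ^ k * z) • g (n + k) = z • g n := by
  rw [mul_comm, mul_zsmul, ← Nat.cast_pow, natCast_zsmul, hg.pow_nsmul_apply_add]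

theorem pow_nsmul_apply (hg : IsPruferSeq p g) (n : ℕ) : p ^ n • g n = g 0 := by
  simpa using hg.pow_nsmul_apply_add 0 n

theorem pow_succ_nsmul_apply (hg : IsPruferSeq p g) (n : ℕ) : p ^ (n + 1) • g n = 0 := by
  rw [pow_succ', mul_smul, hg.pow_nsmul_apply, hg.nsmul_apply_zero]

theorem addOrderOf_apply [Fact p.Prime] (hg : IsPruferSeq p g) (n : ℕ) :
    addOrderOf (g n) = p ^ (n + 1) :=
  addOrderOf_eq_prime_pow (by rw [hg.pow_nsmul_apply]; exact hg.apply_zero_ne_zero)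
    (hg.pow_succ_nsmul_apply n)

theorem zsmul_apply_eq_zsmul_apply_iff [Fact p.Prime] (hg : IsPruferSeq p g) {n n' : ℕ}
    {z z' : ℤ} : z • g n = z' • g n' ↔ ((p ^ (n + n' + 1) : ℕ) : ℤ) ∣ p ^ n' * z - p ^ n * z' := by
  rw [← hg.zsmul_apply_add n n' z, ← hg.zsmul_apply_add n' n z', add_comm n' n, ← sub_eq_zero,
    ← sub_smul, ← addOrderOf_dvd_iff_zsmul_eq_zero, hg.addOrderOf_apply]

theorem zsmul_apply_eq_zsmul_apply_iff_of_isPruferSeq [Fact p.Prime] (hg : IsPruferSeq p g)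
    (hh : IsPruferSeq p h) {n n' : ℕ} {z z' : ℤ} : z • g n = z' • g n' ↔ z • h n = z' • h n' := by
  rw [hg.zsmul_apply_eq_zsmul_apply_iff, hh.zsmul_apply_eq_zsmul_apply_iff]

theorem monotone_zmultiples (hg : IsPruferSeq p g) : Monotone fun n => zmultiples (g n) :=
  monotone_nat_of_le_succ fun n => by
    rw [zmultiples_le, ← hg.nsmul_apply_succ n]
    exact nsmul_mem (mem_zmultiples (g (n + 1))) p

theorem exists_zsmul_apply_eq (hg : IsPruferSeq p g) {x y : A}
    (hx : x ∈ ⨆ n, zmultiples (g n)) (hy : y ∈ ⨆ n, zmultiples (g n)) :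
    ∃ n, ∃ z z' : ℤ, z • g n = x ∧ z' • g n = y := by
  rw [mem_iSup_of_directed hg.monotone_zmultiples.directed_le] at hx hy
  obtain ⟨n, hx⟩ := hx
  obtain ⟨n', hy⟩ := hy
  obtain ⟨z, hz⟩ := mem_zmultiples_iff.mp (hg.monotone_zmultiples (le_max_left n n') hx :
    x ∈ zmultiples (g (max n n')))
  obtain ⟨z', hz'⟩ := mem_zmultiples_iff.mp (hg.monotone_zmultiples (le_max_right n n') hy :
    y ∈ zmultiples (g (max n n')))
  exact ⟨_, z, z', hz, hz'⟩

theorem exists_injective_addMonoidHom [Fact p.Prime] (hg : IsPruferSeq p g)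
    (hh : IsPruferSeq p h) : ∃ f : ↥(⨆ n, zmultiples (g n)) →+ B, Function.Injective f := by
  choose n z _ hz _ using fun x : ↥(⨆ n, zmultiples (g n)) => hg.exists_zsmul_apply_eq x.2 x.2
  have hf (x : ↥(⨆ n, zmultiples (g n))) (m : ℕ) (k : ℤ) (hk : k • g m = x) :
      z x • h (n x) = k • h m :=
    (hg.zsmul_apply_eq_zsmul_apply_iff_of_isPruferSeq hh).mp ((hz x).trans hk.symm)
  refine ⟨{ toFun := fun x => z x • h (n x), map_zero' := ?_, map_add' := fun x y => ?_ }, ?_⟩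
  · simpa using hf 0 0 0 (zero_smul ℤ _)
  · obtain ⟨m, k, k', hk, hk'⟩ := hg.exists_zsmul_apply_eq x.2 y.2
    rw [hf x m k hk, hf y m k' hk', hf (x + y) m (k + k') (by simp [add_zsmul, hk, hk']),
      add_zsmul]
  · refine (injective_iff_map_eq_zero _).mpr fun x hx => Subtype.ext ?_
    rw [← hz x, (hg.zsmul_apply_eq_zsmul_apply_iff_of_isPruferSeq hh (z' := 0) (n' := 0)).mpr
      (by simpa using hx), zero_smul, ZeroMemClass.coe_zero]

end IsPruferSeq

def pruferSeq (p n : ℕ) : ℚ ⧸ zmultiples (1 : ℚ) := (((p : ℚ) ^ (n + 1))⁻¹ : ℚ)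

theorem mk_rat_eq_zero_iff_exists_intCast {q : ℚ} :
    (q : ℚ ⧸ zmultiples (1 : ℚ)) = 0 ↔ ∃ z : ℤ, (z : ℚ) = q := by
  simp [QuotientAddGroup.eq_zero_iff, mem_zmultiples_iff]

theorem isPruferSeq_pruferSeq (p : ℕ) [hp : Fact p.Prime] : IsPruferSeq p (pruferSeq p) := by
  have hp0 : (p : ℚ) ≠ 0 := Nat.cast_ne_zero.mpr hp.out.ne_zero
  refine ⟨?_, ?_, fun n => ?_⟩
  · intro h
    obtain ⟨z, hz⟩ := mk_rat_eq_zero_iff_exists_intCast.mp h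
    have := congrArg Rat.den hz
    rw [Rat.den_intCast, zero_add, pow_one, Rat.inv_natCast_den_of_pos hp.out.pos] at this
    exact hp.out.one_lt.ne this
  · rw [pruferSeq, ← QuotientAddGroup.mk_nsmul, nsmul_eq_mul, zero_add, pow_one,
      mul_inv_cancel₀ hp0]
    exact mk_rat_eq_zero_iff_exists_intCast.mpr ⟨1, Int.cast_one⟩
  · rw [pruferSeq, pruferSeq, ← QuotientAddGroup.mk_nsmul, nsmul_eq_mul]
    congr 1
    field_simp
    ring

theorem primaryComponent_eq_iSup_zmultiples_pruferSeq (p : ℕ) [Fact p.Prime] :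
    AddCommGroup.primaryComponent (ℚ ⧸ zmultiples (1 : ℚ)) p =
      ⨆ n, zmultiples (pruferSeq p n) := by
  refine le_antisymm (fun x hx => ?_) (iSup_le fun n => zmultiples_le.mpr ?_)
  · obtain ⟨k, hk⟩ := AddCommGroup.mem_primaryComponent.mp hx
    induction x using QuotientAddGroup.induction_on with | H q => ?_
    rw [← QuotientAddGroup.mk_nsmul] at hk
    obtain ⟨z, hz⟩ := mk_rat_eq_zero_iff_exists_intCast.mp hk
    refine mem_iSup_of_mem k (mem_zmultiples_iff.mpr ⟨p * z, ?_⟩)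
    rw [pruferSeq, ← QuotientAddGroup.mk_zsmul, zsmul_eq_mul]
    congr 1
    push_cast
    rw [hz, nsmul_eq_mul, Nat.cast_pow]
    have hp0 : (p : ℚ) ≠ 0 := Nat.cast_ne_zero.mpr (Fact.out : p.Prime).ne_zero
    field_simp
    ring
  · exact AddCommGroup.mem_primaryComponent.mpr
      ⟨n + 1, (isPruferSeq_pruferSeq p).pow_succ_nsmul_apply n⟩

section Existence

variable {p : ℕ} {G : Type*} [AddCommGroup G]

theorem exists_ne_zero_nsmul_eq_zero_forall_exists_pow_nsmul_eq [Infinite G]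
    (hpG : ∀ g : G, ∃ n : ℕ, p ^ n • g = 0) (hfin : ∀ n : ℕ, {g : G | p ^ n • g = 0}.Finite) :
    ∃ a : G, (a ≠ 0 ∧ p • a = 0) ∧ ∀ k, ∃ y, p ^ k • y = a := by
  refine exists_mem_forall_exists_pow_nsmul_eq
    ((hfin 1).subset fun x hx => show p ^ 1 • x = 0 by rw [pow_one]; exact hx.2) fun k => ?_
  obtain ⟨g, hg⟩ := (hfin k).exists_notMem
  obtain ⟨n, hn⟩ := hpG (p ^ k • g)
  obtain ⟨j, hj, hj'⟩ := exists_pow_nsmul_ne_zero_and_nsmul_pow_nsmul_eq_zero hg hn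
  exact ⟨p ^ j • p ^ k • g, ⟨hj, hj'⟩, p ^ j • g, smul_comm _ _ _⟩

theorem exists_isPruferSeq [Infinite G]
    (hpG : ∀ g : G, ∃ n : ℕ, p ^ n • g = 0) (hfin : ∀ n : ℕ, {g : G | p ^ n • g = 0}.Finite) :
    ∃ g : ℕ → G, IsPruferSeq p g := by
  obtain ⟨a, ⟨ha0, hpa⟩, ha⟩ := exists_ne_zero_nsmul_eq_zero_forall_exists_pow_nsmul_eq hpG hfin
  set D := {d : G | ∀ k, ∃ y, p ^ k • y = d}
  have hdiv (d : D) : ∃ e : D, p • (e : G) = d := by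
    obtain ⟨n, hn⟩ := hpG d
    obtain ⟨e, he, he'⟩ := exists_nsmul_eq_forall_exists_pow_nsmul_eq hn (hfin (n + 1)) d.2
    exact ⟨⟨e, he'⟩, he⟩
  choose f hf using hdiv
  exact ⟨fun n => f^[n] ⟨a, ha⟩, ha0, hpa, fun n => by
    rw [Function.iterate_succ_apply']
    exact hf _⟩

end Existence

/-- Let `p` be a prime and `G` an infinite abelian `p`-group such that every `pⁿ`-torsion
subgroup `G[pⁿ]` is finite. Then `G` contains a subgroup isomorphic to `ℤ(p^∞)`. -/
theorem infinite_pGroup_finite_torsion_contains_prufer (p : ℕ) [Fact p.Prime]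
    (G : Type*) [AddCommGroup G] [Infinite G]
    (hpG : ∀ g : G, ∃ n : ℕ, p ^ n • g = 0)
    (hfin : ∀ n : ℕ, {g : G | p ^ n • g = 0}.Finite) :
    ∃ H : AddSubgroup G, Nonempty (H ≃+ PruferGroup p) := by
  obtain ⟨g, hg⟩ := exists_isPruferSeq hpG hfin
  obtain ⟨f, hf⟩ := (isPruferSeq_pruferSeq p).exists_injective_addMonoidHom hg
  exact ⟨f.range, ⟨(AddMonoidHom.ofInjective hf).symm.trans
    (AddEquiv.addSubgroupCongr (primaryComponent_eq_iSup_zmultiples_pruferSeq p)).symm⟩⟩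
end

section
/- Let G be a topological group, H ⊆ G a subgroup, and suppose U ⊆ H, V, K ⊆ G with e ∈ U, e ∈ V, K ⊆ V, K·K⁻¹ ⊆ U·V, H ∩ (U·V) ⊆ U, and the multiplication map is injective on U × K. Then the multiplication map m : H × K → G, m(h,k) = h·k, is injective. -/
open Pointwise

/-! If `h₁ k₁ = h₂ k₂` then `k₂ k₁⁻¹ = h₂⁻¹ h₁` lies in `H ∩ K K⁻¹ ⊆ H ∩ U V ⊆ U`, and
`(k₂ k₁⁻¹) · k₁ = 1 · k₂` is a coincidence of products on `U × K`, so `k₁ = k₂`. -/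

theorem injOn_mul_subgroup_prod_of_mul_inv_mem {G : Type*} [Group G] (H : Subgroup G) (K : Set G)
    (hK : ∀ k₁ ∈ K, ∀ k₂ ∈ K, k₂ * k₁⁻¹ ∈ H → k₁ = k₂) :
    Set.InjOn (fun p : G × G => p.1 * p.2) ((H : Set G) ×ˢ K) := by
  rintro ⟨h₁, k₁⟩ ⟨hh₁, hk₁⟩ ⟨h₂, k₂⟩ ⟨hh₂, hk₂⟩ (heq : h₁ * k₁ = h₂ * k₂)
  have hquot : k₂ * k₁⁻¹ = h₂⁻¹ * h₁ := by
    rw [mul_inv_eq_iff_eq_mul, mul_assoc, heq, inv_mul_cancel_left]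
  obtain rfl : k₁ = k₂ := hK k₁ hk₁ k₂ hk₂ (hquot ▸ H.mul_mem (H.inv_mem hh₂) hh₁)
  rw [mul_right_cancel heq]

theorem mul_injOn_subgroup_prod_general (G : Type*) [Group G] (H : Subgroup G) (U V K : Set G)
    (hU1 : (1 : G) ∈ U) (hKK : K * K⁻¹ ⊆ U * V) (hHUV : (H : Set G) ∩ (U * V) ⊆ U)
    (hinj : Set.InjOn (fun p : G × G => p.1 * p.2) (U ×ˢ K)) :
    Set.InjOn (fun p : G × G => p.1 * p.2) ((H : Set G) ×ˢ K) := by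
  refine injOn_mul_subgroup_prod_of_mul_inv_mem H K fun k₁ hk₁ k₂ hk₂ hH => ?_
  have hU : k₂ * k₁⁻¹ ∈ U :=
    hHUV ⟨hH, hKK (Set.mul_mem_mul hk₂ (Set.inv_mem_inv.mpr hk₁))⟩
  exact congrArg Prod.snd (hinj (Set.mk_mem_prod hU hk₁) (Set.mk_mem_prod hU1 hk₂) (by simp))

/-- Let `G` be a topological group, `H ⊆ G` a subgroup, and `U ⊆ H`, `V, K ⊆ G` sets with
`e ∈ U`, `e ∈ V`, `K ⊆ V`, `K·K⁻¹ ⊆ U·V`, `H ∩ (U·V) ⊆ U`, such that multiplication is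
injective on `U × K`. Then the multiplication map `m : H × K → G` is injective. -/
theorem mul_injOn_subgroup_prod (G : Type*) [Group G] [TopologicalSpace G]
    [IsTopologicalGroup G] (H : Subgroup G) (U V K : Set G)
    (hUH : U ⊆ (H : Set G)) (hU1 : (1 : G) ∈ U) (hV1 : (1 : G) ∈ V) (hKV : K ⊆ V)
    (hKK : K * K⁻¹ ⊆ U * V) (hHUV : (H : Set G) ∩ (U * V) ⊆ U)
    (hinj : Set.InjOn (fun p : G × G => p.1 * p.2) (U ×ˢ K)) :
    Set.InjOn (fun p : G × G => p.1 * p.2) ((H : Set G) ×ˢ K) :=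
  mul_injOn_subgroup_prod_general G H U V K hU1 hKK hHUV hinj
end

section
/- If the real line ℝ can be covered by κ many translates of a compact Lebesgue-null set C, then for every n ≥ 1 and every compact group K, the group K × ℝⁿ can be covered by κ many translates of a compact Haar-null set, namely K × C × [0,1]^{n-1}. -/
open MeasureTheory Pointwise

universe u

/-!
Translating `C` by `T` and the unit cube by `ℤⁿ` covers `ℝ × ℝⁿ`, and `T` is uncountable since
countably many translates of a null set cannot cover `ℝ`; so `κ · ℵ₀ = κ` translates suffice.
The set `K × C × [0,1]ⁿ` is Haar-null because pushing `μ`, restricted to `K × ℝ × [0,1]ⁿ`, forward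
along the first real coordinate gives a translation-invariant measure on `ℝ` that is finite on
compacts, hence absolutely continuous with respect to Lebesgue measure by uniqueness of Haar measure.
-/

theorem isFiniteMeasureOnCompacts_map_restrict {X Y : Type*} [TopologicalSpace X]
    [MeasurableSpace X] [TopologicalSpace Y] [T2Space Y] [MeasurableSpace Y]
    [OpensMeasurableSpace Y] {μ : Measure X} [IsFiniteMeasureOnCompacts μ] {f : X → Y}
    (hf : Measurable f) {W : Set X} (hW : ∀ L, IsCompact L → IsCompact (f ⁻¹' L ∩ W)) :
    IsFiniteMeasureOnCompacts ((μ.restrict W).map f) := by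
  refine ⟨fun L hL => ?_⟩
  rw [Measure.map_apply hf hL.measurableSet, Measure.restrict_apply (hf hL.measurableSet)]
  exact (hW L hL).measure_lt_top

theorem isAddLeftInvariant_map_restrict {G H : Type*} [AddGroup G] [MeasurableSpace G]
    [MeasurableAdd G] [AddGroup H] [MeasurableSpace H] [MeasurableAdd H] {μ : Measure G}
    [μ.IsAddLeftInvariant] {π : G →+ H} (hπ : Measurable π) {W : Set G}
    (hW : ∀ h, ∃ g, π g = h ∧ (g + ·) ⁻¹' W = W) :
    ((μ.restrict W).map π).IsAddLeftInvariant := by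
  refine ⟨fun h => Measure.ext fun B hB => ?_⟩
  obtain ⟨g, rfl, hg⟩ := hW h
  have hpre : π ⁻¹' ((π g + ·) ⁻¹' B) ∩ W = (g + ·) ⁻¹' (π ⁻¹' B ∩ W) := by
    rw [Set.preimage_inter, hg]
    ext x
    simp
  rw [Measure.map_apply (measurable_const_add _) hB, Measure.map_apply hπ hB,
    Measure.map_apply hπ (measurable_const_add _ hB), Measure.restrict_apply (hπ hB),
    Measure.restrict_apply (hπ (measurable_const_add _ hB)), hpre, measure_preimage_add]

theorem measure_preimage_inter_eq_zero {G H : Type*} [AddGroup G] [TopologicalSpace G]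
    [MeasurableSpace G] [MeasurableAdd G] [AddGroup H] [TopologicalSpace H]
    [IsTopologicalAddGroup H] [T2Space H] [LocallyCompactSpace H] [SecondCountableTopology H]
    [MeasurableSpace H] [BorelSpace H] {μ : Measure G} [μ.IsAddLeftInvariant]
    [IsFiniteMeasureOnCompacts μ] (ν : Measure H) [ν.IsAddHaarMeasure] {π : G →+ H}
    (hπ : Measurable π) {W : Set G} (hW_inv : ∀ h, ∃ g, π g = h ∧ (g + ·) ⁻¹' W = W)
    (hW_cpt : ∀ L, IsCompact L → IsCompact (π ⁻¹' L ∩ W)) {C : Set H} (hC : ν C = 0) :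
    μ (π ⁻¹' C ∩ W) = 0 := by
  have := isAddLeftInvariant_map_restrict (μ := μ) hπ hW_inv
  have := isFiniteMeasureOnCompacts_map_restrict (μ := μ) hπ hW_cpt
  have hac : (μ.restrict W).map π ≪ ν := Measure.absolutelyContinuous_isAddHaarMeasure _ ν
  refine le_antisymm ?_ bot_le
  calc μ (π ⁻¹' C ∩ W) ≤ μ.restrict W (π ⁻¹' C) := Measure.le_restrict_apply _ _
    _ ≤ (μ.restrict W).map π C := Measure.le_map_apply hπ.aemeasurable C
    _ = 0 := hac hC

def slab (C : Set ℝ) (n : ℕ) : Set (Fin (n + 1) → ℝ) :=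
  {v | v 0 ∈ C ∧ ∀ i, i ≠ 0 → v i ∈ Set.Icc (0 : ℝ) 1}

theorem slab_eq_pi (C : Set ℝ) (n : ℕ) :
    slab C n = Set.univ.pi (Fin.cons C fun _ => Set.Icc (0 : ℝ) 1) := by
  ext v
  simp [slab, Fin.forall_fin_succ]

theorem isCompact_slab {C : Set ℝ} (hC : IsCompact C) (n : ℕ) : IsCompact (slab C n) :=
  slab_eq_pi C n ▸ isCompact_univ_pi (Fin.cases hC fun _ => isCompact_Icc)

theorem measure_univ_prod_slab_eq_zero {K : Type*} [AddGroup K] [TopologicalSpace K]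
    [ContinuousAdd K] [CompactSpace K] {n : ℕ} [MeasurableSpace (K × (Fin (n + 1) → ℝ))]
    [BorelSpace (K × (Fin (n + 1) → ℝ))] (μ : Measure (K × (Fin (n + 1) → ℝ)))
    [μ.IsAddHaarMeasure] {C : Set ℝ} (hC : volume C = 0) :
    μ (Set.univ ×ˢ slab C n) = 0 := by
  let π : K × (Fin (n + 1) → ℝ) →+ ℝ :=
    (Pi.evalAddMonoidHom (fun _ => ℝ) 0).comp (AddMonoidHom.snd K _)
  have hπ : Continuous π := (continuous_apply 0).comp continuous_snd
  have hπ_slab (L : Set ℝ) : π ⁻¹' L ∩ Set.univ ×ˢ slab Set.univ n = Set.univ ×ˢ slab L n := by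
    ext; simp [π, slab]
  have hW_inv (x : ℝ) : ∃ g, π g = x ∧ (g + ·) ⁻¹' (Set.univ ×ˢ slab Set.univ n) =
      Set.univ ×ˢ slab Set.univ n := by
    refine ⟨(0, Pi.single 0 x), by simp [π], ?_⟩
    ext
    simp +contextual [slab]
  rw [← hπ_slab]
  exact measure_preimage_inter_eq_zero volume hπ.measurable hW_inv
    (fun L hL => hπ_slab L ▸ isCompact_univ.prod (isCompact_slab hL n)) hC

def CoverableByTranslates {G : Type*} [Add G] (κ : Cardinal) (S : Set G) : Prop :=
  ∃ T : Set G, Cardinal.mk T ≤ κ ∧ ⋃ t ∈ T, t +ᵥ S = Set.univ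

theorem aleph0_lt_of_coverableByTranslates {G : Type*} [AddGroup G] [MeasurableSpace G]
    [MeasurableAdd G] (μ : Measure G) [μ.IsAddLeftInvariant] [NeZero μ] {κ : Cardinal}
    {S : Set G} (hS : μ S = 0) (h : CoverableByTranslates κ S) : Cardinal.aleph0 < κ := by
  obtain ⟨T, hT, hcov⟩ := h
  refine lt_of_lt_of_le (not_le.mp fun hle => ?_) hT
  have hct : T.Countable := Set.countable_coe_iff.mp (Cardinal.mk_le_aleph0_iff.mp hle)
  have : μ Set.univ = 0 := hcov ▸ (measure_biUnion_null_iff hct).2 fun t _ => by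
    rw [measure_vadd]; exact hS
  exact NeZero.ne μ (Measure.measure_univ_eq_zero.mp this)

theorem CoverableByTranslates.univ_prod {K H : Type u} [AddGroup K] [AddGroup H] {κ : Cardinal}
    {S : Set H} (h : CoverableByTranslates κ S) :
    CoverableByTranslates κ (Set.univ ×ˢ S : Set (K × H)) := by
  obtain ⟨T, hT, hcov⟩ := h
  refine ⟨(fun t => ((0 : K), t)) '' T, Cardinal.mk_image_le.trans hT, ?_⟩
  rw [Set.eq_univ_iff_forall]
  rintro ⟨k, x⟩
  obtain ⟨t, ht, hx⟩ := Set.mem_iUnion₂.mp (hcov ▸ Set.mem_univ x)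
  exact Set.mem_iUnion₂.mpr ⟨_, Set.mem_image_of_mem _ ht,
    by simpa [Set.mem_vadd_set_iff_neg_vadd_mem] using hx⟩

theorem CoverableByTranslates.slab {κ : Cardinal} {C : Set ℝ} (hκ : Cardinal.aleph0 ≤ κ)
    (h : CoverableByTranslates κ C) (n : ℕ) : CoverableByTranslates κ (slab C n) := by
  obtain ⟨T, hT, hcov⟩ := h
  let shift : T × (Fin n → ℤ) → Fin (n + 1) → ℝ := fun p => Fin.cons (p.1 : ℝ) fun j => (p.2 j : ℝ)
  refine ⟨Set.range shift, ?_, ?_⟩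
  · calc Cardinal.mk (Set.range shift) ≤ Cardinal.mk (T × (Fin n → ℤ)) := Cardinal.mk_range_le
      _ = Cardinal.mk T * Cardinal.mk (Fin n → ℤ) := by simp [Cardinal.mk_prod]
      _ ≤ κ := Cardinal.mul_le_of_le hκ hT (Cardinal.mk_le_aleph0.trans hκ)
  rw [Set.eq_univ_iff_forall]
  intro v
  obtain ⟨t, ht, hv⟩ := Set.mem_iUnion₂.mp (hcov ▸ Set.mem_univ (v 0))
  refine Set.mem_iUnion₂.mpr ⟨shift (⟨t, ht⟩, fun j => ⌊v j.succ⌋), Set.mem_range_self _, ?_⟩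
  rw [Set.mem_vadd_set_iff_neg_vadd_mem] at hv ⊢
  refine ⟨by simpa [shift] using hv, fun i hi => ?_⟩
  obtain ⟨j, rfl⟩ := Fin.exists_succ_eq.mpr hi
  simpa [shift, neg_add_eq_sub, Int.self_sub_floor] using
    Set.mem_Icc.mpr ⟨Int.fract_nonneg (v j.succ), (Int.fract_lt_one (v j.succ)).le⟩

/-- If `ℝ` can be covered by `κ` many translates of a compact Lebesgue-null set `C`, then for
every `n ≥ 1` and every compact group `K`, the group `K × ℝⁿ` can be covered by `κ` many
translates of the compact Haar-null set `K × C × [0,1]^{n-1}`. -/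
theorem compact_times_real_power_nice (κ : Cardinal) (C : Set ℝ) (hC : IsCompact C)
    (hCnull : MeasureTheory.volume C = 0)
    (T : Set ℝ) (hT : Cardinal.mk T ≤ κ) (hcov : ⋃ t ∈ T, t +ᵥ C = Set.univ)
    (n : ℕ) (K : Type) [AddGroup K] [TopologicalSpace K] [IsTopologicalAddGroup K]
    [CompactSpace K]
    [MeasurableSpace (K × (Fin (n + 1) → ℝ))] [BorelSpace (K × (Fin (n + 1) → ℝ))]
    (μ : Measure (K × (Fin (n + 1) → ℝ))) [μ.IsAddHaarMeasure] :
    IsCompact ((Set.univ : Set K) ×ˢ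
        {v : Fin (n + 1) → ℝ | v 0 ∈ C ∧ ∀ i, i ≠ 0 → v i ∈ Set.Icc (0 : ℝ) 1}) ∧
    μ ((Set.univ : Set K) ×ˢ
        {v : Fin (n + 1) → ℝ | v 0 ∈ C ∧ ∀ i, i ≠ 0 → v i ∈ Set.Icc (0 : ℝ) 1}) = 0 ∧
    ∃ T' : Set (K × (Fin (n + 1) → ℝ)), Cardinal.mk T' ≤ κ ∧
      ⋃ t ∈ T', t +ᵥ ((Set.univ : Set K) ×ˢ
        {v : Fin (n + 1) → ℝ | v 0 ∈ C ∧ ∀ i, i ≠ 0 → v i ∈ Set.Icc (0 : ℝ) 1}) =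
        Set.univ := by
  have hcover : CoverableByTranslates κ C := ⟨T, hT, hcov⟩
  have hκ := aleph0_lt_of_coverableByTranslates volume hCnull hcover
  exact ⟨isCompact_univ.prod (isCompact_slab hC n), measure_univ_prod_slab_eq_zero μ hCnull,
    (hcover.slab hκ.le n).univ_prod⟩
end

section
/- Let G be a group and define a graph on G \ {0} by connecting each nonzero g with p·g (when p·g ≠ 0, rooting the tree at 0). If G is an infinite abelian p-group in which every element has only finitely many 'predecessors' (i.e., the equation p·x = g has only finitely many solutions for each g, equivalently G[p] is finite), then by König's lemma there exists an infinite sequence (gₙ) in G with g₀ ≠ 0 and p·gₙ₊₁ = gₙ for all n. -/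
/-!
Let `Lₙ = {x | pⁿ • x ≠ 0, pⁿ⁺¹ • x = 0}`. Since `G` is an infinite torsion group whose
`G[pⁿ]` are finite, it has elements of arbitrarily large order, and suitable multiples of them
lie in `Lₙ`, so every `Lₙ` is nonempty. Multiplication by `pʲ⁻ⁱ` maps `Lⱼ` to `Lᵢ`,
`L₀ ⊆ G[p]` is finite and the fibres of `p • · : Lₙ₊₁ → Lₙ` are finite, so Kőnig's lemma for
inverse systems yields a compatible thread `gₙ ∈ Lₙ`.
-/

section AddMonoid

variable {G : Type*} [AddMonoid G] {p : ℕ}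

theorem pow_smul_pow_smul_of_add_eq {a b c : ℕ} (h : a + b = c) (x : G) :
    p ^ a • p ^ b • x = p ^ c • x := by
  rw [smul_smul, ← pow_add, h]

theorem finite_setOf_pow_smul_eq (hpred : ∀ g : G, {x : G | p • x = g}.Finite) (n : ℕ) (g : G) :
    {x : G | p ^ n • x = g}.Finite := by
  induction n generalizing g with
  | zero => simp
  | succ n ih =>
    have hpreimage : {x : G | p ^ (n + 1) • x = g} = (p • ·) ⁻¹' {y | p ^ n • y = g} := by
      ext x
      simp [pow_succ, mul_smul]
    rw [hpreimage]
    exact (ih g).preimage' fun y _ => hpred y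

theorem exists_pow_smul_ne_zero_and_pow_succ_smul_eq_zero [Infinite G]
    (hpG : ∀ g : G, ∃ n : ℕ, p ^ n • g = 0) {n : ℕ} (hfin : {x : G | p ^ n • x = 0}.Finite) :
    ∃ y : G, p ^ n • y ≠ 0 ∧ p ^ (n + 1) • y = 0 := by
  classical
  obtain ⟨x, hx⟩ := hfin.exists_notMem
  have hx : p ^ n • x ≠ 0 := hx
  let m := Nat.find (hpG x)
  have hm : p ^ m • x = 0 := Nat.find_spec (hpG x)
  have hnm : n < m := by
    by_contra! hmn
    exact hx (by rw [← pow_smul_pow_smul_of_add_eq (Nat.sub_add_cancel hmn), hm, smul_zero])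
  refine ⟨p ^ (m - (n + 1)) • x, ?_, ?_⟩
  · rw [pow_smul_pow_smul_of_add_eq rfl]
    exact Nat.find_min (hpG x) (by omega)
  · rwa [pow_smul_pow_smul_of_add_eq (Nat.add_sub_cancel' hnm)]

theorem exists_pow_smul_chain_of_layers_nonempty (hpred : ∀ g : G, {x : G | p • x = g}.Finite)
    (hlayer : ∀ n : ℕ, ∃ y : G, p ^ n • y ≠ 0 ∧ p ^ (n + 1) • y = 0) :
    ∃ g : ℕ → G, g 0 ≠ 0 ∧ ∀ n, p • g (n + 1) = g n := by
  let L : ℕ → Type _ := fun n => {x : G // p ^ n • x ≠ 0 ∧ p ^ (n + 1) • x = 0}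
  let π {i j : ℕ} (hij : i ≤ j) (x : L j) : L i :=
    ⟨p ^ (j - i) • x.1, by rw [pow_smul_pow_smul_of_add_eq (c := j) (by omega)]; exact x.2.1,
      by rw [pow_smul_pow_smul_of_add_eq (c := j + 1) (by omega)]; exact x.2.2⟩
  have : Finite (L 0) := by
    have : Finite {x : G // p • x = 0} := (hpred 0).to_subtype
    exact Finite.of_injective (fun x : L 0 => (⟨x.1, by simpa using x.2.2⟩ : {x : G // p • x = 0}))
      fun _ _ h => Subtype.ext (congrArg Subtype.val h :)
  have (n : ℕ) : Nonempty (L n) := let ⟨y, hy⟩ := hlayer n; ⟨⟨y, hy⟩⟩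
  obtain ⟨f, hf⟩ := exists_seq_forall_proj_of_forall_finite π
    (fun i x => Subtype.ext (by simp [π]))
    (fun i j k hij hjk x => Subtype.ext (pow_smul_pow_smul_of_add_eq (by omega) _))
    (fun i a => ((hpred a.1).preimage Subtype.val_injective.injOn).subset fun b hb => by
      simpa [π] using congrArg Subtype.val hb)
  refine ⟨fun n => (f n).1, by simpa using (f 0).2.1, fun n => ?_⟩
  simpa [π] using congrArg Subtype.val (hf n.le_succ)

end AddMonoid

theorem exists_divisible_chain_of_finite_predecessors_general (p : ℕ)
    (G : Type*) [AddCommGroup G] [Infinite G]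
    (hpG : ∀ g : G, ∃ n : ℕ, p ^ n • g = 0)
    (hpred : ∀ g : G, {x : G | p • x = g}.Finite) :
    ∃ g : ℕ → G, g 0 ≠ 0 ∧ ∀ n, p • g (n + 1) = g n :=
  exists_pow_smul_chain_of_layers_nonempty hpred fun _ =>
    exists_pow_smul_ne_zero_and_pow_succ_smul_eq_zero hpG (finite_setOf_pow_smul_eq hpred _ 0)

/-- König's lemma argument: if `G` is an infinite abelian `p`-group in which every element
has only finitely many predecessors under multiplication by `p` (equivalently, `G[p]` is
finite), then there is an infinite sequence `(gₙ)` with `g₀ ≠ 0` and `p·gₙ₊₁ = gₙ`. -/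
theorem exists_divisible_chain_of_finite_predecessors (p : ℕ) (hp : p.Prime)
    (G : Type*) [AddCommGroup G] [Infinite G]
    (hpG : ∀ g : G, ∃ n : ℕ, p ^ n • g = 0)
    (hpred : ∀ g : G, {x : G | p • x = g}.Finite) :
    ∃ g : ℕ → G, g 0 ≠ 0 ∧ ∀ n, p • g (n + 1) = g n :=
  exists_divisible_chain_of_finite_predecessors_general p G hpG hpred
end
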